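/- (Abstract penalized saddle-point well-posedness.) Let V and Q be real Hilbert spaces, a : V × V → ℝ a continuous symmetric bilinear form that is coercive on V, b : V × Q → ℝ a continuous bilinear form, c : Q × Q → ℝ a continuous symmetric positive-semidefinite bilinear form, and λ > 0. Then for every continuous linear functional L on V there exists a unique pair (u,p) ∈ V × Q with a(u,v) + b(v,p) = L(v) for all v ∈ V and b(u,q) - (1/λ) c(p,q) = 0 for all q ∈ Q, provided b satisfies the inf-sup condition: there is β > 0 with sup_{v ∈ V, v ≠ 0} b(v,q)/‖v‖ ≥ β ‖q‖ for all q ∈ Q. -/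

import Mathlib

/-!
Eliminate `u`. By Lax–Milgram the coercive form `a` identifies `V` with its dual, so the
first equation says `u = A⁻¹ (L - Bᵀ p)`, and the second then becomes `S p = B A⁻¹ L` for the
Schur complement `S = B A⁻¹ Bᵀ + λ⁻¹ C`. With `w = A⁻¹ Bᵀ p` one has
`S (p, p) ≥ a (w, w) ≥ α ‖w‖²`, while the inf-sup condition gives
`β ‖p‖ ≤ ‖Bᵀ p‖ = ‖A w‖ ≤ ‖a‖ ‖w‖`; so `S` is coercive and Lax–Milgram on `Q` determines `p`,
hence `u`.
-/

noncomputable section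

variable {V Q : Type*}
  [NormedAddCommGroup V] [InnerProductSpace ℝ V] [CompleteSpace V]
  [NormedAddCommGroup Q] [InnerProductSpace ℝ Q] [CompleteSpace Q]

/-- Continuity (boundedness) of a bilinear form with constant `C`. -/
def IsBddBilin {V Q : Type*} [NormedAddCommGroup V] [NormedAddCommGroup Q]
    [Module ℝ V] [Module ℝ Q] (b : V →ₗ[ℝ] Q →ₗ[ℝ] ℝ) (C : ℝ) : Prop :=
  ∀ v w, |b v w| ≤ C * ‖v‖ * ‖w‖

/-- The inf-sup (Babuška–Brezzi) condition with constant `β`: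
sup_{v ≠ 0} b(v,q)/‖v‖ ≥ β ‖q‖ for every q. -/
def InfSup {V Q : Type*} [NormedAddCommGroup V] [NormedAddCommGroup Q]
    [Module ℝ V] [Module ℝ Q] (b : V →ₗ[ℝ] Q →ₗ[ℝ] ℝ) (β : ℝ) : Prop :=
  ∀ q : Q, β * ‖q‖ ≤ ⨆ v : {v : V // v ≠ 0}, b v.1 q / ‖v.1‖

namespace IsBddBilin

variable {E F : Type*} [NormedAddCommGroup E] [NormedSpace ℝ E]
  [NormedAddCommGroup F] [NormedSpace ℝ F] {b : E →ₗ[ℝ] F →ₗ[ℝ] ℝ} {C : ℝ}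

def mkContinuous₂ (hb : IsBddBilin b C) : E →L[ℝ] F →L[ℝ] ℝ :=
  b.mkContinuous₂ C fun v w => by simpa only [Real.norm_eq_abs] using hb v w

@[simp]
lemma mkContinuous₂_apply (hb : IsBddBilin b C) (v : E) (w : F) :
    hb.mkContinuous₂ v w = b v w :=
  rfl

end IsBddBilin

lemma InfSup.mul_norm_le_norm_flip {E F : Type*} [NormedAddCommGroup E] [NormedSpace ℝ E]
    [NormedAddCommGroup F] [NormedSpace ℝ F] {b : E →ₗ[ℝ] F →ₗ[ℝ] ℝ} {C β : ℝ}
    (hb : IsBddBilin b C) (h : InfSup b β) (q : F) :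
    β * ‖q‖ ≤ ‖hb.mkContinuous₂.flip q‖ :=
  (h q).trans <| Real.iSup_le (fun v => div_le_of_le_mul₀ (norm_nonneg _) (norm_nonneg _) <|
    (le_abs_self _).trans ((hb.mkContinuous₂.flip q).le_opNorm v.1)) (norm_nonneg _)

lemma IsCoercive.of_mul_le_mul {E : Type*} [NormedAddCommGroup E] [NormedSpace ℝ E]
    {S : E →L[ℝ] E →L[ℝ] ℝ} {c K : ℝ} (hc : 0 < c) (hK : 0 ≤ K) (hS : ∀ q, 0 ≤ S q q)
    (h : ∀ q, c * ‖q‖ * ‖q‖ ≤ K * S q q) : IsCoercive S := by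
  refine ⟨c / (K + 1), by positivity, fun q => ?_⟩
  rw [div_mul_eq_mul_div, div_mul_eq_mul_div, div_le_iff₀ (by positivity)]
  nlinarith [h q, hS q]

namespace IsCoercive

variable {A : V →L[ℝ] V →L[ℝ] ℝ}

def dualEquiv (hA : IsCoercive A) : V ≃L[ℝ] (V →L[ℝ] ℝ) :=
  hA.continuousLinearEquivOfBilin.trans (InnerProductSpace.toDual ℝ V).toContinuousLinearEquiv

@[simp]
lemma dualEquiv_apply (hA : IsCoercive A) (u : V) : hA.dualEquiv u = A u := by
  ext v
  simp [dualEquiv]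

lemma apply_dualEquiv_symm (hA : IsCoercive A) (f : V →L[ℝ] ℝ) (v : V) :
    A (hA.dualEquiv.symm f) v = f v := by
  rw [← hA.dualEquiv_apply, ContinuousLinearEquiv.apply_symm_apply]

end IsCoercive

section SchurComplement

variable {F : Type*} [NormedAddCommGroup F] [NormedSpace ℝ F]
  {A : V →L[ℝ] V →L[ℝ] ℝ} (hA : IsCoercive A) (B : V →L[ℝ] F →L[ℝ] ℝ) (C : F →L[ℝ] F →L[ℝ] ℝ)

def schurComplement : F →L[ℝ] F →L[ℝ] ℝ :=
  B.comp ((hA.dualEquiv.symm : (V →L[ℝ] ℝ) →L[ℝ] V).comp B.flip) + C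

lemma schurComplement_apply (p q : F) :
    schurComplement hA B C p q = B (hA.dualEquiv.symm (B.flip p)) q + C p q :=
  rfl

lemma isCoercive_schurComplement (hC : ∀ q, 0 ≤ C q q) {β : ℝ} (hβ : 0 < β)
    (hB : ∀ q, β * ‖q‖ ≤ ‖B.flip q‖) : IsCoercive (schurComplement hA B C) := by
  obtain ⟨α, hα, hAα⟩ := id hA
  have key (q : F) : α * ‖hA.dualEquiv.symm (B.flip q)‖ ^ 2 ≤ schurComplement hA B C q q ∧
      β * ‖q‖ ≤ ‖A‖ * ‖hA.dualEquiv.symm (B.flip q)‖ := by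
    set x := hA.dualEquiv.symm (B.flip q)
    have hAx : A x = B.flip q := ContinuousLinearMap.ext (hA.apply_dualEquiv_symm _)
    constructor
    · calc α * ‖x‖ ^ 2 ≤ A x x := by rw [sq, ← mul_assoc]; exact hAα x
        _ = B x q := by rw [hAx, ContinuousLinearMap.flip_apply]
        _ ≤ schurComplement hA B C q q := by rw [schurComplement_apply]; linarith [hC q]
    · calc β * ‖q‖ ≤ ‖A x‖ := hAx ▸ hB q
        _ ≤ ‖A‖ * ‖x‖ := A.le_opNorm x
  refine .of_mul_le_mul (c := α * β ^ 2) (K := ‖A‖ ^ 2) (by positivity) (by positivity)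
    (fun q => (by positivity : 0 ≤ α * _).trans (key q).1) fun q => ?_
  obtain ⟨h1, h2⟩ := key q
  have h3 : (β * ‖q‖) ^ 2 ≤ (‖A‖ * ‖hA.dualEquiv.symm (B.flip q)‖) ^ 2 :=
    pow_le_pow_left₀ (by positivity) h2 2
  nlinarith [mul_le_mul_of_nonneg_left h3 hα.le, mul_le_mul_of_nonneg_left h1 (sq_nonneg ‖A‖)]

end SchurComplement

theorem existsUnique_saddlePoint {A : V →L[ℝ] V →L[ℝ] ℝ} (hA : IsCoercive A)
    (B : V →L[ℝ] Q →L[ℝ] ℝ) (C : Q →L[ℝ] Q →L[ℝ] ℝ) (hS : IsCoercive (schurComplement hA B C))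
    (L : V →L[ℝ] ℝ) :
    ∃! up : V × Q, (∀ v, A up.1 v + B v up.2 = L v) ∧ (∀ q, B up.1 q - C up.2 q = 0) := by
  set w : Q → V := fun p => hA.dualEquiv.symm (B.flip p)
  set u₀ := hA.dualEquiv.symm L
  set p₀ := hS.dualEquiv.symm (B u₀)
  have hw (p : Q) (v : V) : A (w p) v = B v p := hA.apply_dualEquiv_symm _ v
  have hu₀ (v : V) : A u₀ v = L v := hA.apply_dualEquiv_symm L v
  have hp₀ (q : Q) : B (w p₀) q + C p₀ q = B u₀ q := hS.apply_dualEquiv_symm _ q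
  refine ⟨(u₀ - w p₀, p₀), ⟨fun v => ?_, fun q => ?_⟩, ?_⟩
  · simp only [map_sub, sub_apply, hw, hu₀, sub_add_cancel]
  · simp only [map_sub, sub_apply]
    linarith [hp₀ q]
  rintro ⟨u, p⟩ ⟨hu, hp⟩
  obtain rfl : u = u₀ - w p := hA.dualEquiv.injective <| by
    ext v
    simp only [IsCoercive.dualEquiv_apply, map_sub, sub_apply, hw, hu₀]
    linarith [hu v]
  obtain rfl : p = p₀ := hS.dualEquiv.eq_symm_apply.mpr <| by
    ext q
    have := hp q
    simp only [map_sub, sub_apply] at this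
    simp only [IsCoercive.dualEquiv_apply, schurComplement_apply]
    linarith
  rfl

theorem stmt_8_general (a : V →ₗ[ℝ] V →ₗ[ℝ] ℝ) (b : V →ₗ[ℝ] Q →ₗ[ℝ] ℝ)
    (c : Q →ₗ[ℝ] Q →ₗ[ℝ] ℝ) (lam : ℝ) (hlam : 0 < lam)
    (Ca : ℝ) (ha_bdd : IsBddBilin a Ca)
    (α : ℝ) (hα : 0 < α) (ha_coer : ∀ v, α * ‖v‖ ^ 2 ≤ a v v)
    (Cb : ℝ) (hb_bdd : IsBddBilin b Cb)
    (β : ℝ) (hβ : 0 < β) (hb_infsup : InfSup b β)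
    (Cc : ℝ) (hc_bdd : IsBddBilin c Cc)
    (hc_pos : ∀ q, 0 ≤ c q q)
    (L : V →L[ℝ] ℝ) :
    ∃! up : V × Q,
      (∀ v : V, a up.1 v + b v up.2 = L v) ∧
      (∀ q : Q, b up.1 q - (1 / lam) * c up.2 q = 0) := by
  have ha : IsCoercive ha_bdd.mkContinuous₂ :=
    ⟨α, hα, fun u => by
      simpa only [mul_assoc, ← sq, IsBddBilin.mkContinuous₂_apply] using ha_coer u⟩
  have hS := isCoercive_schurComplement ha hb_bdd.mkContinuous₂
    ((1 / lam) • hc_bdd.mkContinuous₂)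
    (fun q => by simpa using mul_nonneg (one_div_pos.mpr hlam).le (hc_pos q)) hβ
    (hb_infsup.mul_norm_le_norm_flip hb_bdd)
  simpa using existsUnique_saddlePoint ha _ _ hS L

/-- abstract penalized saddle-point well-posedness. If a is continuous,
symmetric and coercive on V, b is continuous and satisfies the inf-sup condition,
c is continuous, symmetric and positive semi-definite on Q, and λ > 0, then for every
continuous linear functional L on V there is a unique (u,p) ∈ V × Q with
a(u,v) + b(v,p) = L(v) ∀v and b(u,q) - (1/λ)c(p,q) = 0 ∀q. -/
theorem stmt_8 (a : V →ₗ[ℝ] V →ₗ[ℝ] ℝ) (b : V →ₗ[ℝ] Q →ₗ[ℝ] ℝ)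
    (c : Q →ₗ[ℝ] Q →ₗ[ℝ] ℝ) (lam : ℝ) (hlam : 0 < lam)
    (Ca : ℝ) (ha_bdd : IsBddBilin a Ca) (ha_symm : ∀ u v, a u v = a v u)
    (α : ℝ) (hα : 0 < α) (ha_coer : ∀ v, α * ‖v‖ ^ 2 ≤ a v v)
    (Cb : ℝ) (hb_bdd : IsBddBilin b Cb)
    (β : ℝ) (hβ : 0 < β) (hb_infsup : InfSup b β)
    (Cc : ℝ) (hc_bdd : IsBddBilin c Cc) (hc_symm : ∀ p q, c p q = c q p)
    (hc_pos : ∀ q, 0 ≤ c q q)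
    (L : V →L[ℝ] ℝ) :
    ∃! up : V × Q,
      (∀ v : V, a up.1 v + b v up.2 = L v) ∧
      (∀ q : Q, b up.1 q - (1 / lam) * c up.2 q = 0) :=
  stmt_8_general a b c lam hlam Ca ha_bdd α hα ha_coer Cb hb_bdd β hβ hb_infsup Cc hc_bdd hc_pos L
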